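/- Quantitative angle-gap transfer under approximately balanced padding. Let a, b ∈ ℝ^d be nonzero vectors with ⟨a, b⟩ ≥ 0, and let w = (w₁,…,w_d) be weights with 0 < m ≤ ‖w_i‖ ≤ M for all i ∈ [d]. Then ‖a^s − b^s‖ ≤ √2·(M/m)·‖Pad_w(a)^s − Pad_w(b)^s‖. -/

import Mathlib

open scoped BigOperators

noncomputable section

/-- Normalization `v^s := v/‖v‖`, with the convention `0^s = 0`. -/
def nzd {ι : Type*} [Fintype ι] (v : EuclideanSpace ℝ ι) : EuclideanSpace ℝ ι :=
  ‖v‖⁻¹ • v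

/-- Cosine of the angle between two vectors. -/
def cosAngle {ι : Type*} [Fintype ι] (v w : EuclideanSpace ℝ ι) : ℝ :=
  (@inner ℝ _ _ v w) / (‖v‖ * ‖w‖)

/-- Sine of the angle between two vectors. -/
def sinAngle {ι : Type*} [Fintype ι] (v w : EuclideanSpace ℝ ι) : ℝ :=
  Real.sqrt (1 - (cosAngle v w) ^ 2)

/-- Weighted padding: `Pad_w(a)` is the concatenation of the blocks `a₁w₁, …, a_d w_d`. -/
def pad {d : ℕ} {pd : Fin d → ℕ}
    (w : (i : Fin d) → EuclideanSpace ℝ (Fin (pd i)))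
    (a : EuclideanSpace ℝ (Fin d)) :
    EuclideanSpace ℝ ((i : Fin d) × Fin (pd i)) :=
  WithLp.toLp 2 (fun (it : (i : Fin d) × Fin (pd i)) => a it.1 * w it.1 it.2)

lemma inner_pad {d : ℕ} {pd : Fin d → ℕ}
    (w : (i : Fin d) → EuclideanSpace ℝ (Fin (pd i)))
    (a b : EuclideanSpace ℝ (Fin d)) :
    (inner ℝ (pad w a) (pad w b) : ℝ) = ∑ i, a i * b i * ‖w i‖^2 := by
  have hw : ∀ i, (‖w i‖:ℝ)^2 = ∑ j, w i j * w i j := by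
    intro i
    rw [← real_inner_self_eq_norm_sq]
    simp only [PiLp.inner_apply, RCLike.inner_apply, conj_trivial]
  simp only [PiLp.inner_apply, RCLike.inner_apply, conj_trivial, pad, PiLp.toLp_apply]
  rw [← Finset.univ_sigma_univ, Finset.sum_sigma]
  refine Finset.sum_congr rfl fun i _ => ?_
  rw [hw i, Finset.mul_sum]
  exact Finset.sum_congr rfl fun j _ => by ring

lemma inner_std {d : ℕ} (a b : EuclideanSpace ℝ (Fin d)) :
    (inner ℝ a b : ℝ) = ∑ i, a i * b i := by
  simp [PiLp.inner_apply, RCLike.inner_apply, mul_comm]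

lemma nzd_dist_sq {ι : Type*} [Fintype ι] (x y : EuclideanSpace ℝ ι) (hx : x ≠ 0) (hy : y ≠ 0) :
    ‖nzd x - nzd y‖^2 = 2 - 2 * (inner ℝ x y : ℝ) / (‖x‖ * ‖y‖) := by
  have hx' : ‖x‖ ≠ 0 := norm_ne_zero_iff.mpr hx
  have hy' : ‖y‖ ≠ 0 := norm_ne_zero_iff.mpr hy
  rw [norm_sub_sq_real]
  have h1 : ‖nzd x‖ = 1 := by
    rw [nzd, norm_smul, norm_inv, norm_norm, inv_mul_cancel₀ hx']
  have h2 : ‖nzd y‖ = 1 := by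
    rw [nzd, norm_smul, norm_inv, norm_norm, inv_mul_cancel₀ hy']
  rw [h1, h2, nzd, nzd, real_inner_smul_left, real_inner_smul_right]
  field_simp
  ring

lemma key_sum {d : ℕ} (a b c : Fin d → ℝ) (m : ℝ) (hc : ∀ i, m^2 ≤ c i)
    (hS1 : 0 < ∑ i, a i ^ 2 * c i) (hT1 : 0 < ∑ i, a i ^ 2) :
    m^2 * ((∑ i, a i ^ 2) * (∑ i, b i ^ 2) - (∑ i, a i * b i)^2) * (∑ i, a i ^ 2 * c i)
      ≤ ((∑ i, a i ^ 2 * c i) * (∑ i, b i ^ 2 * c i) - (∑ i, a i * b i * c i)^2)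
          * (∑ i, a i ^ 2) := by
  set S1 := ∑ i, a i ^ 2 * c i with hS1def
  set S2 := ∑ i, b i ^ 2 * c i with hS2def
  set S12 := ∑ i, a i * b i * c i with hS12def
  set T1 := ∑ i, a i ^ 2 with hT1def
  set T2 := ∑ i, b i ^ 2 with hT2def
  set T12 := ∑ i, a i * b i with hT12def
  set t := S12 / S1 with htdef
  have ht : t * S1 = S12 := div_mul_cancel₀ _ hS1.ne'
  have eB : ∑ i, (b i - t * a i)^2 * c i = S2 - 2*t*S12 + t^2*S1 := by
    rw [show S2 - 2*t*S12 + t^2*S1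
        = ∑ i, (b i ^2 * c i - 2*t*(a i * b i * c i) + t^2*(a i^2 * c i)) from by
      rw [Finset.sum_add_distrib, Finset.sum_sub_distrib, ← Finset.mul_sum, ← Finset.mul_sum]]
    exact Finset.sum_congr rfl fun i _ => by ring
  have eC : ∑ i, (b i - t * a i)^2 = T2 - 2*t*T12 + t^2*T1 := by
    rw [show T2 - 2*t*T12 + t^2*T1
        = ∑ i, (b i ^2 - 2*t*(a i * b i) + t^2*(a i^2)) from by
      rw [Finset.sum_add_distrib, Finset.sum_sub_distrib, ← Finset.mul_sum, ← Finset.mul_sum]]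
    exact Finset.sum_congr rfl fun i _ => by ring
  have hA : m^2 * (T2 - 2*t*T12 + t^2*T1) ≤ S2 - 2*t*S12 + t^2*S1 := by
    rw [← eB, ← eC, Finset.mul_sum]
    refine Finset.sum_le_sum fun i _ => ?_
    have := sq_nonneg (b i - t * a i)
    nlinarith [hc i]
  have ht2 : t^2 * S1 = t * S12 := by rw [← ht]; ring
  have hA' : m^2 * (T2 - 2*t*T12 + t^2*T1) ≤ S2 - t*S12 := by linarith
  have h1 : S1 * S2 - S12^2 = S1 * (S2 - t*S12) := by rw [← ht]; ring
  have h2 : m^2 * (T1*T2 - T12^2) ≤ m^2 * (T2 - 2*t*T12 + t^2*T1) * T1 := by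
    nlinarith [sq_nonneg (t*T1 - T12), sq_nonneg m]
  have h3 := mul_le_mul_of_nonneg_right h2 hS1.le
  have h4 := mul_le_mul_of_nonneg_right (mul_le_mul_of_nonneg_right hA' hT1.le) hS1.le
  nlinarith [h3, h4, h1]


set_option maxHeartbeats 1000000 in
/-- Quantitative angle-gap transfer under approximately balanced
padding.  If `⟨a, b⟩ ≥ 0` and `0 < m ≤ ‖w_i‖ ≤ M` for all `i`, then
`‖a^s − b^s‖ ≤ √2·(M/m)·‖Pad_w(a)^s − Pad_w(b)^s‖`. -/
theorem angle_gap_transfer_balanced_padding {d : ℕ} {pd : Fin d → ℕ}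
    (a b : EuclideanSpace ℝ (Fin d)) (ha : a ≠ 0) (hb : b ≠ 0)
    (hab : 0 ≤ (@inner ℝ _ _ a b))
    (w : (i : Fin d) → EuclideanSpace ℝ (Fin (pd i)))
    (m M : ℝ) (hm : 0 < m) (hbound : ∀ i, m ≤ ‖w i‖ ∧ ‖w i‖ ≤ M) :
    ‖nzd a - nzd b‖ ≤ Real.sqrt 2 * (M / m) * ‖nzd (pad w a) - nzd (pad w b)‖ := by
  rcases Nat.eq_zero_or_pos d with hd | hd
  · subst hd
    exact absurd (PiLp.ext fun (i : Fin 0) => i.elim0) ha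
  have hM : 0 < M := hm.trans_le (((hbound ⟨0, hd⟩).1).trans ((hbound ⟨0, hd⟩).2))
  have hc : ∀ i, m^2 ≤ ‖w i‖^2 := fun i => by nlinarith [(hbound i).1, hm.le]
  have hcM : ∀ i, ‖w i‖^2 ≤ M^2 := fun i => by nlinarith [(hbound i).2, norm_nonneg (w i)]
  have hna : 0 < ‖a‖ := norm_pos_iff.mpr ha
  have hnb : 0 < ‖b‖ := norm_pos_iff.mpr hb
  have hna2 : ‖a‖^2 = ∑ i, a i ^ 2 := by
    rw [← real_inner_self_eq_norm_sq, inner_std]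
    exact Finset.sum_congr rfl fun i _ => (sq (a i)).symm
  have hnb2 : ‖b‖^2 = ∑ i, b i ^ 2 := by
    rw [← real_inner_self_eq_norm_sq, inner_std]
    exact Finset.sum_congr rfl fun i _ => (sq (b i)).symm
  have hnA2 : ‖pad w a‖^2 = ∑ i, a i ^ 2 * ‖w i‖^2 := by
    rw [← real_inner_self_eq_norm_sq, inner_pad]
    exact Finset.sum_congr rfl fun i _ => by ring
  have hnB2 : ‖pad w b‖^2 = ∑ i, b i ^ 2 * ‖w i‖^2 := by
    rw [← real_inner_self_eq_norm_sq, inner_pad]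
    exact Finset.sum_congr rfl fun i _ => by ring
  have hT1pos : 0 < ∑ i, a i ^ 2 := hna2 ▸ pow_pos hna 2
  have hS1pos : 0 < ∑ i, a i ^ 2 * ‖w i‖^2 := by
    have h1 : m^2 * ∑ i, a i ^ 2 ≤ ∑ i, a i ^ 2 * ‖w i‖^2 := by
      rw [Finset.mul_sum]
      exact Finset.sum_le_sum fun i _ =>
        by nlinarith [hc i, sq_nonneg (a i)]
    have : 0 < m^2 * ∑ i, a i ^ 2 := mul_pos (pow_pos hm 2) hT1pos
    linarith
  have hS2pos : 0 < ∑ i, b i ^ 2 * ‖w i‖^2 := by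
    have hT2pos : 0 < ∑ i, b i ^ 2 := hnb2 ▸ pow_pos hnb 2
    have h1 : m^2 * ∑ i, b i ^ 2 ≤ ∑ i, b i ^ 2 * ‖w i‖^2 := by
      rw [Finset.mul_sum]
      exact Finset.sum_le_sum fun i _ =>
        by nlinarith [hc i, sq_nonneg (b i)]
    have : 0 < m^2 * ∑ i, b i ^ 2 := mul_pos (pow_pos hm 2) hT2pos
    linarith
  have hnA : 0 < ‖pad w a‖ := by
    have h := hnA2 ▸ hS1pos
    nlinarith [norm_nonneg (pad w a)]
  have hnB : 0 < ‖pad w b‖ := by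
    have h := hnB2 ▸ hS2pos
    nlinarith [norm_nonneg (pad w b)]
  have hA0 : pad w a ≠ 0 := norm_pos_iff.mp hnA
  have hB0 : pad w b ≠ 0 := norm_pos_iff.mp hnB
  have hBle : ‖pad w b‖^2 ≤ M^2 * ‖b‖^2 := by
    rw [hnB2, hnb2, Finset.mul_sum]
    exact Finset.sum_le_sum fun i _ => by nlinarith [hcM i, sq_nonneg (b i)]
  -- key inequality
  have key := key_sum (fun i => a i) (fun i => b i) (fun i => ‖w i‖^2) m hc hS1pos hT1pos
  rw [← hna2, ← hnb2, ← hnA2, ← hnB2, ← inner_std a b, ← inner_pad w a b] at key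
  -- abbreviations
  set p : ℝ := (inner ℝ a b : ℝ) with hpdef
  set P : ℝ := (inner ℝ (pad w a) (pad w b) : ℝ) with hPdef
  set na := ‖a‖
  set nb := ‖b‖
  set nA := ‖pad w a‖
  set nB := ‖pad w b‖
  have cs1 : p ≤ na * nb := real_inner_le_norm a b
  have cs2 : |P| ≤ nA * nB := abs_real_inner_le_norm _ _
  have hq1 : (0:ℝ) < na * nb := mul_pos hna hnb
  have hq2 : (0:ℝ) < nA * nB := mul_pos hnA hnB
  set c1 : ℝ := p / (na * nb) with hc1def
  set c2 : ℝ := P / (nA * nB) with hc2def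
  have hc1a : 0 ≤ c1 := div_nonneg hab hq1.le
  have hc1b : c1 ≤ 1 := (div_le_one hq1).mpr cs1
  have hc2ab : |c2| ≤ 1 := by
    rw [hc2def, abs_div, abs_of_pos hq2]
    exact div_le_one_of_le₀ cs2 hq2.le
  have hc2a : -1 ≤ c2 := (abs_le.mp hc2ab).1
  have hc2b : c2 ≤ 1 := (abs_le.mp hc2ab).2
  -- middle inequality: 1 - c1^2 ≤ (M/m)^2 * (1 - c2^2)
  have hGc : 0 ≤ nA^2 * nB^2 - P^2 := by
    have := sq_abs P ▸ pow_le_pow_left₀ (abs_nonneg P) cs2 2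
    nlinarith [this]
  have hpoly : (((na*nb)^2 - p^2) * (m^2 * (nA*nB)^2)) ≤ (M^2 * ((nA*nB)^2 - P^2)) * (na*nb)^2 := by
    have hkey2 : m^2 * (na^2*nb^2 - p^2) * nA^2 * nB^2 ≤ (nA^2*nB^2 - P^2) * na^2 * nB^2 :=
      mul_le_mul_of_nonneg_right key (sq_nonneg nB)
    have hstep : (nA^2*nB^2 - P^2) * na^2 * nB^2 ≤ (nA^2*nB^2 - P^2) * na^2 * (M^2 * nb^2) :=
      mul_le_mul_of_nonneg_left hBle (mul_nonneg hGc (sq_nonneg na))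
    nlinarith [hkey2, hstep]
  have middle : 1 - c1^2 ≤ (M/m)^2 * (1 - c2^2) := by
    have e1 : 1 - c1^2 = ((na*nb)^2 - p^2) / (na*nb)^2 := by
      rw [hc1def]; field_simp
    have e2 : (M/m)^2 * (1 - c2^2) = (M^2 * ((nA*nB)^2 - P^2)) / (m^2 * (nA*nB)^2) := by
      rw [hc2def]; field_simp
    rw [e1, e2, div_le_div_iff₀ (by positivity) (by positivity)]
    linarith [hpoly]
  -- squared goal
  have hK : (0:ℝ) ≤ (M/m)^2 := sq_nonneg _
  have hsq : ‖nzd a - nzd b‖^2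
      ≤ (Real.sqrt 2 * (M / m) * ‖nzd (pad w a) - nzd (pad w b)‖)^2 := by
    rw [nzd_dist_sq a b ha hb, mul_pow, mul_pow,
      Real.sq_sqrt (by norm_num : (0:ℝ) ≤ 2), nzd_dist_sq _ _ hA0 hB0]
    have l1 : 2 * p / (na * nb) = 2 * c1 := by rw [hc1def]; ring
    have l2 : 2 * P / (nA * nB) = 2 * c2 := by rw [hc2def]; ring
    rw [l1, l2]
    nlinarith [middle, mul_nonneg hc1a (by linarith : (0:ℝ) ≤ 1 - c1),
      mul_nonneg hK (sq_nonneg (1 - c2))]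
  have hRnn : 0 ≤ Real.sqrt 2 * (M / m) * ‖nzd (pad w a) - nzd (pad w b)‖ :=
    mul_nonneg (mul_nonneg (Real.sqrt_nonneg 2) (div_nonneg hM.le hm.le)) (norm_nonneg _)
  calc ‖nzd a - nzd b‖ = Real.sqrt (‖nzd a - nzd b‖^2) := (Real.sqrt_sq (norm_nonneg _)).symm
    _ ≤ Real.sqrt ((Real.sqrt 2 * (M / m) * ‖nzd (pad w a) - nzd (pad w b)‖)^2) :=
        Real.sqrt_le_sqrt hsq
    _ = _ := Real.sqrt_sq hRnn
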